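/- (Lemma 2.1, second inequality.) Let X ⊆ {0,1}^n be finite and nonempty and let 0 ≤ α₁ ≤ α₂ ≤ 1/2. Let (x₂*, y₂*) ∈ X × X be a minimizer over X × X of the function (x,y) ↦ g(x,y,α₂) + (α₁ − α₂)·overline∂g(x,y). Then for all α ∈ [α₁, α₂], h(α) ≥ h(α₂) + (α − α₂)·overline∂g(x₂*, y₂*). -/

import Mathlib

/-- `‖v‖^(Γ)`: the maximum over subsets `S` of cardinality `Γ` of `Σ_{i∈S} v i`. -/
noncomputable def gammaNorm (n : ℕ) (Γ : ℕ) (v : Fin n → ℝ) : ℝ :=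
  sSup {s : ℝ | ∃ S : Finset (Fin n), S.card = Γ ∧ s = ∑ i ∈ S, v i}

/-- The function `g(x,y,α)` from the k = 2 reformulation. -/
noncomputable def g (n : ℕ) (Γn : ℕ) (chat d : Fin n → ℝ) (x y : Fin n → ℝ) (α : ℝ) : ℝ :=
  α * ∑ i, chat i * x i + (1 - α) * ∑ i, chat i * y i +
    gammaNorm n Γn (fun i => d i * (α * x i + (1 - α) * y i))

/-- `h(α) = min_{x,y ∈ X} g(x,y,α)`. -/
noncomputable def hfun (n : ℕ) (Γn : ℕ) (chat d : Fin n → ℝ)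
    (X : Finset (Fin n → ℝ)) (α : ℝ) : ℝ :=
  sInf {w : ℝ | ∃ x ∈ X, ∃ y ∈ X, w = g n Γn chat d x y α}

/-- `overline∂g(x,y) = Σ ĉ_i x_i − Σ ĉ_i y_i + ‖(d_i x_i)_i‖^(Γ)`. -/
noncomputable def upg (n : ℕ) (Γn : ℕ) (chat d : Fin n → ℝ) (x y : Fin n → ℝ) : ℝ :=
  (∑ i, chat i * x i) - (∑ i, chat i * y i) + gammaNorm n Γn (fun i => d i * x i)

/-!
Lowering the weight from `β` to `α` changes the robust term of `g(x, y, ·)` by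
`(β - α)·(d x - d y)`, whose top-`Γ` sum is at most `(β - α)·‖d x‖^(Γ)` because `d y ≥ 0`. Hence
`g(x, y, α) ≥ g(x, y, α₂) + (α - α₂)·overline∂g(x, y)` for `α ≤ α₂`. The right-hand side is affine
in `α`; at `α = α₂` it is at least `h(α₂)`, and at `α = α₁` the minimality of `(x₂*, y₂*)` bounds
it below by `h(α₂) + (α₁ - α₂)·overline∂g(x₂*, y₂*)`. Interpolating between the endpoints and
minimizing over `(x, y)` gives the claim.
-/

lemma add_sub_mul_le_add_sub_mul_of_mem_Icc {a b t p q r s : ℝ} (ht : t ∈ Set.Icc a b)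
    (ha : p + (a - b) * q ≤ r + (a - b) * s) (hb : p ≤ r) :
    p + (t - b) * q ≤ r + (t - b) * s := by
  obtain ⟨hat, htb⟩ := ht
  rcases le_total 0 (s - q) with hsq | hsq
  · nlinarith [mul_le_mul_of_nonneg_right hat hsq]
  · nlinarith [mul_nonneg_of_nonpos_of_nonpos (sub_nonpos.2 htb) hsq]

section GammaNorm

variable {n Γ : ℕ}

lemma gammaNorm_set_finite (v : Fin n → ℝ) :
    {s : ℝ | ∃ S : Finset (Fin n), S.card = Γ ∧ s = ∑ i ∈ S, v i}.Finite :=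
  (Set.finite_range fun S : Finset (Fin n) => ∑ i ∈ S, v i).subset
    fun _ ⟨S, _, hs⟩ => ⟨S, hs.symm⟩

lemma sum_le_gammaNorm (v : Fin n → ℝ) {S : Finset (Fin n)} (hS : S.card = Γ) :
    ∑ i ∈ S, v i ≤ gammaNorm n Γ v :=
  le_csSup (gammaNorm_set_finite v).bddAbove ⟨S, hS, rfl⟩

lemma gammaNorm_le (hΓ : Γ ≤ n) {v : Fin n → ℝ} {b : ℝ}
    (hb : ∀ S : Finset (Fin n), S.card = Γ → ∑ i ∈ S, v i ≤ b) :
    gammaNorm n Γ v ≤ b := by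
  obtain ⟨S, -, hS⟩ := Finset.exists_subset_card_eq (s := (Finset.univ : Finset (Fin n)))
    (by simpa using hΓ)
  refine csSup_le ⟨_, S, hS, rfl⟩ ?_
  rintro _ ⟨S, hS, rfl⟩
  exact hb S hS

lemma gammaNorm_mono (hΓ : Γ ≤ n) {v w : Fin n → ℝ} (hvw : v ≤ w) :
    gammaNorm n Γ v ≤ gammaNorm n Γ w :=
  gammaNorm_le hΓ fun _ hS =>
    (Finset.sum_le_sum fun i _ => hvw i).trans (sum_le_gammaNorm w hS)

lemma gammaNorm_add_le (hΓ : Γ ≤ n) (v w : Fin n → ℝ) :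
    gammaNorm n Γ (v + w) ≤ gammaNorm n Γ v + gammaNorm n Γ w :=
  gammaNorm_le hΓ fun _ hS => by
    simpa only [Pi.add_apply, Finset.sum_add_distrib] using
      add_le_add (sum_le_gammaNorm v hS) (sum_le_gammaNorm w hS)

lemma gammaNorm_smul_le (hΓ : Γ ≤ n) {c : ℝ} (hc : 0 ≤ c) (v : Fin n → ℝ) :
    gammaNorm n Γ (c • v) ≤ c * gammaNorm n Γ v :=
  gammaNorm_le hΓ fun _ hS => by
    simpa only [Pi.smul_apply, smul_eq_mul, ← Finset.mul_sum] using
      mul_le_mul_of_nonneg_left (sum_le_gammaNorm v hS) hc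

end GammaNorm

lemma g_add_sub_mul_upg_le {n Γ : ℕ} (hΓ : Γ ≤ n) (chat : Fin n → ℝ) {d y : Fin n → ℝ}
    (hd : ∀ i, 0 ≤ d i) (hy : ∀ i, 0 ≤ y i) (x : Fin n → ℝ) {α β : ℝ} (hαβ : α ≤ β) :
    g n Γ chat d x y β + (α - β) * upg n Γ chat d x y ≤ g n Γ chat d x y α := by
  have hsplit : (fun i => d i * (β * x i + (1 - β) * y i))
      = (fun i => d i * (α * x i + (1 - α) * y i)) + (β - α) • fun i => d i * x i - d i * y i := by
    ext i
    simp only [Pi.add_apply, Pi.smul_apply, smul_eq_mul]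
    ring
  have hdrop : (fun i => d i * x i - d i * y i) ≤ fun i => d i * x i :=
    fun i => sub_le_self _ (mul_nonneg (hd i) (hy i))
  have hrobust := calc
    gammaNorm n Γ (fun i => d i * (β * x i + (1 - β) * y i))
      ≤ gammaNorm n Γ (fun i => d i * (α * x i + (1 - α) * y i))
          + (β - α) * gammaNorm n Γ (fun i => d i * x i - d i * y i) := by
        rw [hsplit]
        exact (gammaNorm_add_le hΓ _ _).trans
          (add_le_add_right (gammaNorm_smul_le hΓ (sub_nonneg.2 hαβ) _) _)
    _ ≤ gammaNorm n Γ (fun i => d i * (α * x i + (1 - α) * y i))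
          + (β - α) * gammaNorm n Γ (fun i => d i * x i) :=
        add_le_add_right
          (mul_le_mul_of_nonneg_left (gammaNorm_mono hΓ hdrop) (sub_nonneg.2 hαβ)) _
  simp only [g, upg]
  linarith

section Hfun

variable {n Γ : ℕ} {chat d : Fin n → ℝ} {X : Finset (Fin n → ℝ)} {α : ℝ}

lemma hfun_le_g {x y : Fin n → ℝ} (hx : x ∈ X) (hy : y ∈ X) :
    hfun n Γ chat d X α ≤ g n Γ chat d x y α := by
  have hfin : {w : ℝ | ∃ x ∈ X, ∃ y ∈ X, w = g n Γ chat d x y α}.Finite :=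
    ((X.finite_toSet.prod X.finite_toSet).image fun p => g n Γ chat d p.1 p.2 α).subset
      fun _ ⟨x, hx, y, hy, hw⟩ => ⟨(x, y), ⟨hx, hy⟩, hw.symm⟩
  exact csInf_le hfin.bddBelow ⟨x, hx, y, hy, rfl⟩

lemma le_hfun (hX : X.Nonempty) {b : ℝ} (hb : ∀ x ∈ X, ∀ y ∈ X, b ≤ g n Γ chat d x y α) :
    b ≤ hfun n Γ chat d X α := by
  obtain ⟨x₀, hx₀⟩ := hX
  refine le_csInf ⟨_, x₀, hx₀, x₀, hx₀, rfl⟩ ?_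
  rintro _ ⟨x, hx, y, hy, rfl⟩
  exact hb x hx y hy

end Hfun

theorem stmt13_general (n : ℕ) (chat d : Fin n → ℝ) (hd : ∀ i, 0 ≤ d i)
    (Γ : ℕ) (hΓ : Γ ≤ n)
    (X : Finset (Fin n → ℝ))
    (hX01 : ∀ x ∈ X, ∀ i, x i = 0 ∨ x i = 1)
    (α₁ α₂ : ℝ)
    (x₂ y₂ : Fin n → ℝ) (hx₂ : x₂ ∈ X) (hy₂ : y₂ ∈ X)
    (hmin : ∀ x ∈ X, ∀ y ∈ X,
      g n Γ chat d x₂ y₂ α₂ + (α₁ - α₂) * upg n Γ chat d x₂ y₂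
        ≤ g n Γ chat d x y α₂ + (α₁ - α₂) * upg n Γ chat d x y) :
    ∀ α ∈ Set.Icc α₁ α₂,
      hfun n Γ chat d X α
        ≥ hfun n Γ chat d X α₂ + (α - α₂) * upg n Γ chat d x₂ y₂ := by
  intro α hα
  refine le_hfun ⟨x₂, hx₂⟩ fun x hx y hy => ?_
  have hy0 : ∀ i, 0 ≤ y i := fun i => by rcases hX01 y hy i with h | h <;> simp [h]
  have hat_α₁ := (add_le_add_left (hfun_le_g hx₂ hy₂) _).trans (hmin x hx y hy)
  calc hfun n Γ chat d X α₂ + (α - α₂) * upg n Γ chat d x₂ y₂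
      ≤ g n Γ chat d x y α₂ + (α - α₂) * upg n Γ chat d x y :=
        add_sub_mul_le_add_sub_mul_of_mem_Icc hα hat_α₁ (hfun_le_g hx hy)
    _ ≤ g n Γ chat d x y α := g_add_sub_mul_upg_le hΓ chat hd hy0 x hα.2

/-- Lemma 2.1, second inequality. -/
theorem stmt13 (n : ℕ) (hn : 1 ≤ n) (chat d : Fin n → ℝ) (hd : ∀ i, 0 ≤ d i)
    (Γ : ℕ) (hΓ : Γ ≤ n)
    (X : Finset (Fin n → ℝ)) (hXne : X.Nonempty)
    (hX01 : ∀ x ∈ X, ∀ i, x i = 0 ∨ x i = 1)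
    (α₁ α₂ : ℝ) (h0 : 0 ≤ α₁) (h12 : α₁ ≤ α₂) (h2 : α₂ ≤ 1 / 2)
    (x₂ y₂ : Fin n → ℝ) (hx₂ : x₂ ∈ X) (hy₂ : y₂ ∈ X)
    (hmin : ∀ x ∈ X, ∀ y ∈ X,
      g n Γ chat d x₂ y₂ α₂ + (α₁ - α₂) * upg n Γ chat d x₂ y₂
        ≤ g n Γ chat d x y α₂ + (α₁ - α₂) * upg n Γ chat d x y) :
    ∀ α ∈ Set.Icc α₁ α₂,
      hfun n Γ chat d X α
        ≥ hfun n Γ chat d X α₂ + (α - α₂) * upg n Γ chat d x₂ y₂ :=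
  stmt13_general n chat d hd Γ hΓ X hX01 α₁ α₂ x₂ y₂ hx₂ hy₂ hmin
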